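/- Let Q = ℝᵈ and L : Q × Q → ℝ be C¹. Consider the discrete Hamilton–Pontryagin paths: for n = 1,…,N, C¹ paths γₙ(s) = (qₙ⁰(s), pₙ⁰(s), qₙ¹(s), pₙ¹(s)) : [0,1] → (Q × Q*)² with pₙ⁰(0) = 0, pₙ¹(0) = 0, and admissibility q₁⁰(0) = q₀, qₙ¹(0) = qₙ₊₁⁰(0) for n = 1,…,N-1, q_N¹(0) = q_N. If the sequence of paths is a critical point of the action S̃ = ∑ₙ ∫₀¹ [L(qₙ⁰(s), qₙ¹(s)) - pₙ⁰(s)·(qₙ⁰)'(s) + pₙ¹(s)·(qₙ¹)'(s)] ds (with respect to all variations preserving the zero-section initial conditions and admissibility), then: (i) qₙ⁰ and qₙ¹ are constant in s, with q₁⁰ = q₀, qₙ¹ = qₙ₊₁⁰, q_N¹ = q_N; (ii) pₙ⁰(1) = -D₁L(qₙ⁰, qₙ¹) and pₙ¹(1) = D₂L(qₙ⁰, qₙ¹) for all n; (iii) pₙ¹(1) = pₙ₊₁⁰(1) for n = 1,…,N-1. -/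

import Mathlib

/-!
Varying the momenta alone, the first variation of the action is `∓ ∫ δp (q')`; since `δp` is an
arbitrary `C¹` path vanishing at `s = 0`, the fundamental lemma of the calculus of variations
forces `q' = 0`, so every configuration path is constant. With constant configurations, a
variation `δq⁰ₙ = g • v` with `g(0) = g(1) = 0` turns criticality, after an integration by parts,
into the weak equation `(p⁰ₙ v)' = -D₁L v`; since `p⁰ₙ(0) = 0` this gives `p⁰ₙ(1) = -D₁L`, and
likewise `p¹ₙ(1) = D₂L`. Finally, the constant variation `δq¹ₙ = δq⁰ₙ₊₁ = v`, which is
admissible because it respects the matching `q¹ₙ(0) = q⁰ₙ₊₁(0)`, gives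
`D₂L(qₙ) + D₁L(qₙ₊₁) = 0`, i.e. `p¹ₙ(1) = p⁰ₙ₊₁(1)`.
-/

noncomputable def D1 {Q : Type*} [NormedAddCommGroup Q] [NormedSpace ℝ Q]
    (L : Q × Q → ℝ) (a b : Q) : Q →L[ℝ] ℝ :=
  fderiv ℝ (fun x => L (x, b)) a

noncomputable def D2 {Q : Type*} [NormedAddCommGroup Q] [NormedSpace ℝ Q]
    (L : Q × Q → ℝ) (a b : Q) : Q →L[ℝ] ℝ :=
  fderiv ℝ (fun y => L (a, y)) b

open MeasureTheory Set Function

theorem Pi.single_apply_apply {ι α E : Type*} [DecidableEq ι] [Zero E] (i j : ι) (f : α → E)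
    (x : α) : (Pi.single i f : ι → α → E) j x = (Pi.single i (f x) : ι → E) j := by
  rcases eq_or_ne j i with rfl | h <;> simp [*]

theorem ContDiff.pi_single_apply {ι 𝕜 E : Type*} [DecidableEq ι] [NontriviallyNormedField 𝕜]
    [NormedAddCommGroup E] [NormedSpace 𝕜 E] {f : 𝕜 → E} {k : WithTop ℕ∞} (hf : ContDiff 𝕜 k f)
    (i j : ι) : ContDiff 𝕜 k ((Pi.single i f : ι → 𝕜 → E) j) := by
  rcases eq_or_ne j i with rfl | h
  · simpa
  · rw [Pi.single_eq_of_ne h]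
    exact contDiff_zero_fun

theorem eqOn_zero_of_forall_integral_mul_eq_zero {h : ℝ → ℝ} {a b : ℝ} (hab : a < b)
    (hh : ContinuousOn h (Icc a b))
    (H : ∀ g : ℝ → ℝ, ContDiff ℝ 1 g → g a = 0 → g b = 0 → ∫ s in a..b, g s * h s = 0) :
    EqOn h 0 (Icc a b) := by
  have hae : ∀ᵐ s, s ∈ Ioo a b → h s = 0 := by
    refine isOpen_Ioo.ae_eq_zero_of_integral_contDiff_smul_eq_zero
      ((hh.mono Ioo_subset_Icc_self).locallyIntegrableOn measurableSet_Ioo)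
      fun g hg _ hsupp => ?_
    have hvanish : ∀ s ∉ Ioo a b, g s = 0 := fun s hs =>
      image_eq_zero_of_notMem_tsupport fun h' => hs (hsupp h')
    rw [← setIntegral_eq_integral_of_forall_compl_eq_zero (s := Ioc a b) fun s hs => by
        rw [hvanish s fun h' => hs (Ioo_subset_Ioc_self h'), zero_smul],
      ← intervalIntegral.integral_of_le hab.le]
    exact H g (hg.of_le (by norm_cast)) (hvanish a (by simp)) (hvanish b (by simp))
  have hIoo : EqOn h 0 (Ioo a b) :=
    Measure.eqOn_open_of_ae_eq ((ae_restrict_iff' measurableSet_Ioo).2 hae) isOpen_Ioo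
      (hh.mono Ioo_subset_Icc_self) continuousOn_const
  exact hIoo.of_subset_closure hh continuousOn_const Ioo_subset_Icc_self
    (closure_Ioo hab.ne).ge

theorem sub_eq_of_forall_integral_mul_add_deriv_mul_eq_zero {P : ℝ → ℝ} {a b c : ℝ} (hab : a < b)
    (hP : ContDiff ℝ 1 P)
    (H : ∀ g : ℝ → ℝ, ContDiff ℝ 1 g → g a = 0 → g b = 0 →
      ∫ s in a..b, (g s * c + deriv g s * P s) = 0) :
    P b - P a = (b - a) * c := by
  have hP' := hP.continuous_deriv le_rfl
  have hderiv : EqOn (fun s => c - deriv P s) 0 (Icc a b) := by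
    refine eqOn_zero_of_forall_integral_mul_eq_zero hab (by fun_prop) fun g hg ha hb => ?_
    have hg' := hg.continuous_deriv le_rfl
    have hparts := intervalIntegral.integral_deriv_mul_eq_sub
      (fun x _ => (hg.differentiable one_ne_zero x).hasDerivAt)
      (fun x _ => (hP.differentiable one_ne_zero x).hasDerivAt)
      (hg'.intervalIntegrable a b) (hP'.intervalIntegrable a b)
    rw [ha, hb, zero_mul, zero_mul, sub_zero] at hparts
    calc ∫ s in a..b, g s * (c - deriv P s)
        = ∫ s in a..b, ((g s * c + deriv g s * P s) - (deriv g s * P s + g s * deriv P s)) :=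
          intervalIntegral.integral_congr fun s _ => by ring
      _ = 0 := by
        rw [intervalIntegral.integral_sub (Continuous.intervalIntegrable (by fun_prop) a b)
          (Continuous.intervalIntegrable (by fun_prop) a b), H g hg ha hb, hparts, sub_zero]
  have hFTC := intervalIntegral.integral_eq_sub_of_hasDerivAt (f' := fun _ => c)
    (fun x hx => (hP.differentiable one_ne_zero x).hasDerivAt.congr_deriv
      (sub_eq_zero.1 (hderiv (uIcc_of_le hab.le ▸ hx))).symm) intervalIntegrable_const
  simpa using hFTC.symm

theorem eqOn_const_of_forall_integral_apply_deriv_eq_zero {E : Type*} [NormedAddCommGroup E]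
    [NormedSpace ℝ E] {q : ℝ → E} {a b : ℝ} (hab : a < b) (hq : ContDiff ℝ 1 q)
    (H : ∀ α : ℝ → E →L[ℝ] ℝ, ContDiff ℝ 1 α → α a = 0 → ∫ s in a..b, α s (deriv q s) = 0) :
    ∀ s ∈ Icc a b, q s = q a := by
  have hderiv : ∀ s ∈ Icc a b, deriv q s = 0 := fun s hs =>
    SeparatingDual.eq_zero_of_forall_dual_eq_zero fun ℓ =>
      eqOn_zero_of_forall_integral_mul_eq_zero hab
        ((ℓ.continuous.comp (hq.continuous_deriv le_rfl)).continuousOn)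
        (fun g hg hga _ => by
          simpa using H (fun s => g s • ℓ) (hg.smul contDiff_const) (by simp [hga])) hs
  exact constant_of_has_deriv_right_zero hq.continuous.continuousOn fun s hs =>
    (hderiv s (Ico_subset_Icc_self hs) ▸
      (hq.differentiable one_ne_zero s).hasDerivAt).hasDerivWithinAt

theorem hasDerivAt_intervalIntegral_of_continuous_uncurry {E : Type*} [NormedAddCommGroup E]
    [NormedSpace ℝ E] {F F' : ℝ → ℝ → E} (hF : ∀ x, Continuous (F x))
    (hF' : Continuous (uncurry F')) (hderiv : ∀ x t, HasDerivAt (F · t) (F' x t) x)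
    (a b x₀ : ℝ) :
    HasDerivAt (fun x => ∫ t in a..b, F x t) (∫ t in a..b, F' x₀ t) x₀ := by
  obtain ⟨C, hC⟩ := (isCompact_closedBall x₀ 1).prod isCompact_uIcc
    |>.exists_bound_of_continuousOn (hF'.continuousOn (s := Metric.closedBall x₀ 1 ×ˢ uIcc a b))
  exact (intervalIntegral.hasDerivAt_integral_of_dominated_loc_of_deriv_le (bound := fun _ => C)
    (Metric.ball_mem_nhds x₀ one_pos)
    (Filter.Eventually.of_forall fun x => (hF x).aestronglyMeasurable)
    ((hF x₀).intervalIntegrable _ _)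
    ((hF'.comp (Continuous.prodMk_right x₀)).aestronglyMeasurable)
    (ae_of_all _ fun t ht x hx => hC (x, t) ⟨Metric.ball_subset_closedBall hx, uIoc_subset_uIcc ht⟩)
    intervalIntegrable_const (ae_of_all _ fun t _ x _ => hderiv x t)).2

theorem hasDerivAt_add_smul_apply_add_smul {E F : Type*} [NormedAddCommGroup E] [NormedSpace ℝ E]
    [NormedAddCommGroup F] [NormedSpace ℝ F] (α β : E →L[ℝ] F) (u w : E) (ε : ℝ) :
    HasDerivAt (fun ε : ℝ => (α + ε • β) (u + ε • w)) (β (u + ε • w) + (α + ε • β) w) ε :=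
  (((hasDerivAt_id ε).smul_const β).const_add α).clm_apply
    (((hasDerivAt_id ε).smul_const w).const_add u) |>.congr_deriv (by simp)

theorem deriv_add_smul {E : Type*} [NormedAddCommGroup E] [NormedSpace ℝ E] {f g : ℝ → E}
    (hf : Differentiable ℝ f) (hg : Differentiable ℝ g) (ε : ℝ) :
    deriv (fun s => f s + ε • g s) = fun s => deriv f s + ε • deriv g s :=
  funext fun s => ((hf s).hasDerivAt.add ((hg s).hasDerivAt.const_smul ε)).deriv

theorem fderiv_prod_apply_eq_D1_add_D2 {Q : Type*} [NormedAddCommGroup Q] [NormedSpace ℝ Q]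
    {L : Q × Q → ℝ} {a b : Q} (hL : DifferentiableAt ℝ L (a, b)) (u w : Q) :
    fderiv ℝ L (a, b) (u, w) = D1 L a b u + D2 L a b w := by
  have h1 : D1 L a b = (fderiv ℝ L (a, b)).comp (ContinuousLinearMap.inl ℝ Q Q) :=
    (hL.hasFDerivAt.comp a (hasFDerivAt_prodMk_left a b)).fderiv
  have h2 : D2 L a b = (fderiv ℝ L (a, b)).comp (ContinuousLinearMap.inr ℝ Q Q) :=
    (hL.hasFDerivAt.comp b (hasFDerivAt_prodMk_right a b)).fderiv
  rw [h1, h2, ContinuousLinearMap.comp_apply, ContinuousLinearMap.comp_apply, ← map_add]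
  simp

namespace HamiltonPontryagin

variable {Q : Type*} [NormedAddCommGroup Q] [NormedSpace ℝ Q]

noncomputable def action (L : Q × Q → ℝ) (q0 q1 : ℝ → Q) (p0 p1 : ℝ → Q →L[ℝ] ℝ) : ℝ :=
  ∫ s in (0:ℝ)..1, (L (q0 s, q1 s) - p0 s (deriv q0 s) + p1 s (deriv q1 s))

noncomputable def firstVariation (L : Q × Q → ℝ) (q0 q1 : ℝ → Q) (p0 p1 : ℝ → Q →L[ℝ] ℝ)
    (δq0 δq1 : ℝ → Q) (δp0 δp1 : ℝ → Q →L[ℝ] ℝ) : ℝ :=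
  ∫ s in (0:ℝ)..1, (fderiv ℝ L (q0 s, q1 s) (δq0 s, δq1 s)
    - (δp0 s (deriv q0 s) + p0 s (deriv δq0 s)) + (δp1 s (deriv q1 s) + p1 s (deriv δq1 s)))

/-- Criticality of `∑ n ∈ Finset.Icc 1 N, action L (q0 n) (q1 n) (p0 n) (p1 n)`, stated through its
first variation (see `hasDerivAt_action`). -/
def IsCritical (L : Q × Q → ℝ) (N : ℕ) (q0 q1 : ℕ → ℝ → Q) (p0 p1 : ℕ → ℝ → Q →L[ℝ] ℝ) :
    Prop :=
  ∀ (δq0 δq1 : ℕ → ℝ → Q) (δp0 δp1 : ℕ → ℝ → Q →L[ℝ] ℝ),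
    (∀ n, ContDiff ℝ 1 (δq0 n)) → (∀ n, ContDiff ℝ 1 (δq1 n)) →
    (∀ n, ContDiff ℝ 1 (δp0 n)) → (∀ n, ContDiff ℝ 1 (δp1 n)) →
    (∀ n, δp0 n 0 = 0) → (∀ n, δp1 n 0 = 0) →
    δq0 1 0 = 0 → (∀ n, 1 ≤ n → n ≤ N - 1 → δq1 n 0 = δq0 (n + 1) 0) → δq1 N 0 = 0 →
    ∑ n ∈ Finset.Icc 1 N,
      firstVariation L (q0 n) (q1 n) (p0 n) (p1 n) (δq0 n) (δq1 n) (δp0 n) (δp1 n) = 0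

variable {L : Q × Q → ℝ}

section Step

variable {q0 q1 : ℝ → Q} {p0 p1 : ℝ → Q →L[ℝ] ℝ}

theorem hasDerivAt_action (hL : ContDiff ℝ 1 L) {δq0 δq1 : ℝ → Q} {δp0 δp1 : ℝ → Q →L[ℝ] ℝ}
    (hq0 : ContDiff ℝ 1 q0) (hq1 : ContDiff ℝ 1 q1) (hp0 : Continuous p0) (hp1 : Continuous p1)
    (hδq0 : ContDiff ℝ 1 δq0) (hδq1 : ContDiff ℝ 1 δq1)
    (hδp0 : Continuous δp0) (hδp1 : Continuous δp1) :
    HasDerivAt (fun ε : ℝ => action L (fun s => q0 s + ε • δq0 s) (fun s => q1 s + ε • δq1 s)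
        (fun s => p0 s + ε • δp0 s) (fun s => p1 s + ε • δp1 s))
      (firstVariation L q0 q1 p0 p1 δq0 δq1 δp0 δp1) 0 := by
  have hLpath : ∀ s ε, HasDerivAt (fun ε : ℝ => L (q0 s + ε • δq0 s, q1 s + ε • δq1 s))
      (fderiv ℝ L (q0 s + ε • δq0 s, q1 s + ε • δq1 s) (δq0 s, δq1 s)) ε := fun s ε =>
    (hL.differentiable one_ne_zero _).hasFDerivAt.comp_hasDerivAt ε
      ((((hasDerivAt_id ε).smul_const _).const_add _).prodMk
        (((hasDerivAt_id ε).smul_const _).const_add _) |>.congr_deriv (by simp))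
  have := hL.continuous
  have := hL.continuous_fderiv one_ne_zero
  have := hq0.continuous; have := hq0.continuous_deriv le_rfl
  have := hq1.continuous; have := hq1.continuous_deriv le_rfl
  have := hδq0.continuous; have := hδq0.continuous_deriv le_rfl
  have := hδq1.continuous; have := hδq1.continuous_deriv le_rfl
  unfold action firstVariation
  simp only [deriv_add_smul (hq0.differentiable one_ne_zero) (hδq0.differentiable one_ne_zero),
    deriv_add_smul (hq1.differentiable one_ne_zero) (hδq1.differentiable one_ne_zero)]
  exact (hasDerivAt_intervalIntegral_of_continuous_uncurry
    (F := fun ε s => L (q0 s + ε • δq0 s, q1 s + ε • δq1 s)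
      - (p0 s + ε • δp0 s) (deriv q0 s + ε • deriv δq0 s)
      + (p1 s + ε • δp1 s) (deriv q1 s + ε • deriv δq1 s))
    (F' := fun ε s => fderiv ℝ L (q0 s + ε • δq0 s, q1 s + ε • δq1 s) (δq0 s, δq1 s)
      - (δp0 s (deriv q0 s + ε • deriv δq0 s) + (p0 s + ε • δp0 s) (deriv δq0 s))
      + (δp1 s (deriv q1 s + ε • deriv δq1 s) + (p1 s + ε • δp1 s) (deriv δq1 s)))
    (fun ε => by fun_prop) (by fun_prop)
    (fun ε s => ((hLpath s ε).sub (hasDerivAt_add_smul_apply_add_smul _ _ _ _ ε)).add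
      (hasDerivAt_add_smul_apply_add_smul _ _ _ _ ε)) 0 1 0).congr_deriv (by simp)

@[simp]
theorem firstVariation_zero : firstVariation L q0 q1 p0 p1 0 0 0 0 = 0 := by
  simp [firstVariation, Prod.mk_zero_zero]

theorem firstVariation_momentum0 (α : ℝ → Q →L[ℝ] ℝ) :
    firstVariation L q0 q1 p0 p1 0 0 α 0 = -∫ s in (0:ℝ)..1, α s (deriv q0 s) := by
  simp [firstVariation, Prod.mk_zero_zero]

theorem firstVariation_momentum1 (β : ℝ → Q →L[ℝ] ℝ) :
    firstVariation L q0 q1 p0 p1 0 0 0 β = ∫ s in (0:ℝ)..1, β s (deriv q1 s) := by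
  simp [firstVariation, Prod.mk_zero_zero]

theorem firstVariation_of_eqOn_const (hq0 : ∀ s ∈ Icc (0:ℝ) 1, q0 s = q0 0)
    (hq1 : ∀ s ∈ Icc (0:ℝ) 1, q1 s = q1 0) (hL : DifferentiableAt ℝ L (q0 0, q1 0))
    (δq0 δq1 : ℝ → Q) :
    firstVariation L q0 q1 p0 p1 δq0 δq1 0 0 = ∫ s in (0:ℝ)..1,
      (D1 L (q0 0) (q1 0) (δq0 s) + D2 L (q0 0) (q1 0) (δq1 s)
        - p0 s (deriv δq0 s) + p1 s (deriv δq1 s)) := by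
  refine intervalIntegral.integral_congr fun s hs => ?_
  rw [uIcc_of_le zero_le_one] at hs
  simp only [hq0 s hs, hq1 s hs, fderiv_prod_apply_eq_D1_add_D2 hL, Pi.zero_apply, zero_apply,
    zero_add]

theorem momentum0_one_eq (hL : DifferentiableAt ℝ L (q0 0, q1 0))
    (hq0 : ∀ s ∈ Icc (0:ℝ) 1, q0 s = q0 0) (hq1 : ∀ s ∈ Icc (0:ℝ) 1, q1 s = q1 0)
    (hp0 : ContDiff ℝ 1 p0) (hp0_zero : p0 0 = 0)
    (H : ∀ (g : ℝ → ℝ) (v : Q), ContDiff ℝ 1 g → g 0 = 0 → g 1 = 0 →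
      firstVariation L q0 q1 p0 p1 (fun s => g s • v) 0 0 0 = 0) :
    p0 1 = -D1 L (q0 0) (q1 0) := by
  ext v
  have := sub_eq_of_forall_integral_mul_add_deriv_mul_eq_zero zero_lt_one
    (P := fun s => -p0 s v) (c := D1 L (q0 0) (q1 0) v)
    (hp0.clm_apply (contDiff_const (c := v))).neg fun g hg h0 h1 => by
      refine Eq.trans ?_ (H g v hg h0 h1)
      rw [firstVariation_of_eqOn_const hq0 hq1 hL]
      refine intervalIntegral.integral_congr fun s _ => ?_
      simp [deriv_smul_const (hg.differentiable one_ne_zero s) v]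
      ring
  simp only [hp0_zero, sub_zero, one_mul, zero_apply, neg_zero] at this
  simp [← this]

theorem momentum1_one_eq (hL : DifferentiableAt ℝ L (q0 0, q1 0))
    (hq0 : ∀ s ∈ Icc (0:ℝ) 1, q0 s = q0 0) (hq1 : ∀ s ∈ Icc (0:ℝ) 1, q1 s = q1 0)
    (hp1 : ContDiff ℝ 1 p1) (hp1_zero : p1 0 = 0)
    (H : ∀ (g : ℝ → ℝ) (v : Q), ContDiff ℝ 1 g → g 0 = 0 → g 1 = 0 →
      firstVariation L q0 q1 p0 p1 0 (fun s => g s • v) 0 0 = 0) :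
    p1 1 = D2 L (q0 0) (q1 0) := by
  ext v
  have := sub_eq_of_forall_integral_mul_add_deriv_mul_eq_zero zero_lt_one
    (P := fun s => p1 s v) (c := D2 L (q0 0) (q1 0) v)
    (hp1.clm_apply (contDiff_const (c := v))) fun g hg h0 h1 => by
      refine Eq.trans ?_ (H g v hg h0 h1)
      rw [firstVariation_of_eqOn_const hq0 hq1 hL]
      refine intervalIntegral.integral_congr fun s _ => ?_
      simp [deriv_smul_const (hg.differentiable one_ne_zero s) v]
  simpa [hp1_zero] using this

end Step

namespace IsCritical

variable {N : ℕ} {q0 q1 : ℕ → ℝ → Q} {p0 p1 : ℕ → ℝ → Q →L[ℝ] ℝ}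

theorem firstVariation_eq_zero (hc : IsCritical L N q0 q1 p0 p1) {m : ℕ}
    (hm : m ∈ Finset.Icc 1 N) {a b : ℝ → Q} {α β : ℝ → Q →L[ℝ] ℝ}
    (ha : ContDiff ℝ 1 a) (hb : ContDiff ℝ 1 b) (hα : ContDiff ℝ 1 α) (hβ : ContDiff ℝ 1 β)
    (ha0 : a 0 = 0) (hb0 : b 0 = 0) (hα0 : α 0 = 0) (hβ0 : β 0 = 0) :
    firstVariation L (q0 m) (q1 m) (p0 m) (p1 m) a b α β = 0 := by
  have h := hc (Pi.single m a) (Pi.single m b) (Pi.single m α) (Pi.single m β)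
    (ha.pi_single_apply m) (hb.pi_single_apply m) (hα.pi_single_apply m) (hβ.pi_single_apply m)
    (fun n => by simp [Pi.single_apply_apply, hα0]) (fun n => by simp [Pi.single_apply_apply, hβ0])
    (by simp [Pi.single_apply_apply, ha0]) (fun n _ _ => by simp [Pi.single_apply_apply, ha0, hb0])
    (by simp [Pi.single_apply_apply, hb0])
  rw [Finset.sum_eq_single_of_mem m hm fun n _ hn => by simp [hn]] at h
  simpa using h

theorem firstVariation_add_eq_zero (hc : IsCritical L N q0 q1 p0 p1) {m : ℕ} (hm1 : 1 ≤ m)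
    (hm : m ≤ N - 1) (v : Q) :
    firstVariation L (q0 m) (q1 m) (p0 m) (p1 m) 0 (fun _ => v) 0 0
      + firstVariation L (q0 (m + 1)) (q1 (m + 1)) (p0 (m + 1)) (p1 (m + 1)) (fun _ => v) 0 0 0
      = 0 := by
  have h := hc (Pi.single (m + 1) fun _ => v) (Pi.single m fun _ => v) 0 0
    (contDiff_const.pi_single_apply _) (contDiff_const.pi_single_apply _)
    (fun _ => contDiff_zero_fun) (fun _ => contDiff_zero_fun) (fun _ => rfl) (fun _ => rfl)
    (by rw [Pi.single_eq_of_ne (by omega)]; rfl) (fun n _ _ => by simp [Pi.single_apply])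
    (by rw [Pi.single_eq_of_ne (by omega)]; rfl)
  rw [Finset.sum_eq_add_of_mem m (m + 1) (by simp; omega) (by simp; omega) (by omega)
    fun n _ hn => by simp [hn.1, hn.2]] at h
  simpa using h

theorem configuration_const (hc : IsCritical L N q0 q1 p0 p1) (hq0 : ∀ n, ContDiff ℝ 1 (q0 n))
    (hq1 : ∀ n, ContDiff ℝ 1 (q1 n)) {m : ℕ} (hm : m ∈ Finset.Icc 1 N) :
    (∀ s ∈ Icc (0:ℝ) 1, q0 m s = q0 m 0) ∧ (∀ s ∈ Icc (0:ℝ) 1, q1 m s = q1 m 0) := by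
  constructor
  · refine eqOn_const_of_forall_integral_apply_deriv_eq_zero zero_lt_one (hq0 m)
      fun α hα hα0 => ?_
    simpa [firstVariation_momentum0] using hc.firstVariation_eq_zero hm (a := 0) (b := 0)
      (β := 0) contDiff_zero_fun contDiff_zero_fun hα contDiff_zero_fun rfl rfl hα0 rfl
  · refine eqOn_const_of_forall_integral_apply_deriv_eq_zero zero_lt_one (hq1 m)
      fun β hβ hβ0 => ?_
    simpa [firstVariation_momentum1] using hc.firstVariation_eq_zero hm (a := 0) (b := 0)
      (α := 0) contDiff_zero_fun contDiff_zero_fun contDiff_zero_fun hβ rfl rfl rfl hβ0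

theorem momentum_one_eq (hc : IsCritical L N q0 q1 p0 p1) (hL : ContDiff ℝ 1 L)
    (hq0 : ∀ n, ContDiff ℝ 1 (q0 n)) (hq1 : ∀ n, ContDiff ℝ 1 (q1 n))
    (hp0 : ∀ n, ContDiff ℝ 1 (p0 n)) (hp1 : ∀ n, ContDiff ℝ 1 (p1 n))
    (hzero0 : ∀ n, p0 n 0 = 0) (hzero1 : ∀ n, p1 n 0 = 0) {m : ℕ} (hm : m ∈ Finset.Icc 1 N) :
    p0 m 1 = -D1 L (q0 m 0) (q1 m 0) ∧ p1 m 1 = D2 L (q0 m 0) (q1 m 0) := by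
  obtain ⟨hc0, hc1⟩ := hc.configuration_const hq0 hq1 hm
  have hLm := hL.differentiable one_ne_zero (q0 m 0, q1 m 0)
  exact ⟨momentum0_one_eq hLm hc0 hc1 (hp0 m) (hzero0 m) fun g v hg h0 _ =>
      hc.firstVariation_eq_zero hm (hg.smul contDiff_const) contDiff_zero_fun contDiff_zero_fun
        contDiff_zero_fun (by simp [h0]) rfl rfl rfl,
    momentum1_one_eq hLm hc0 hc1 (hp1 m) (hzero1 m) fun g v hg h0 _ =>
      hc.firstVariation_eq_zero hm contDiff_zero_fun (hg.smul contDiff_const) contDiff_zero_fun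
        contDiff_zero_fun rfl (by simp [h0]) rfl rfl⟩

theorem momentum1_one_eq_momentum0_succ_one (hc : IsCritical L N q0 q1 p0 p1)
    (hL : ContDiff ℝ 1 L) (hq0 : ∀ n, ContDiff ℝ 1 (q0 n)) (hq1 : ∀ n, ContDiff ℝ 1 (q1 n))
    (hp0 : ∀ n, ContDiff ℝ 1 (p0 n)) (hp1 : ∀ n, ContDiff ℝ 1 (p1 n))
    (hzero0 : ∀ n, p0 n 0 = 0) (hzero1 : ∀ n, p1 n 0 = 0) {m : ℕ} (hm1 : 1 ≤ m)
    (hm : m ≤ N - 1) :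
    p1 m 1 = p0 (m + 1) 1 := by
  have hmN : m ∈ Finset.Icc 1 N := Finset.mem_Icc.2 ⟨hm1, by omega⟩
  have hm1N : m + 1 ∈ Finset.Icc 1 N := Finset.mem_Icc.2 ⟨by omega, by omega⟩
  obtain ⟨hc0, hc1⟩ := hc.configuration_const hq0 hq1 hmN
  obtain ⟨hc0', hc1'⟩ := hc.configuration_const hq0 hq1 hm1N
  rw [(hc.momentum_one_eq hL hq0 hq1 hp0 hp1 hzero0 hzero1 hmN).2,
    (hc.momentum_one_eq hL hq0 hq1 hp0 hp1 hzero0 hzero1 hm1N).1]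
  ext v
  have := hc.firstVariation_add_eq_zero hm1 hm v
  rw [firstVariation_of_eqOn_const hc0 hc1 (hL.differentiable one_ne_zero _),
    firstVariation_of_eqOn_const hc0' hc1' (hL.differentiable one_ne_zero _)] at this
  simpa [eq_neg_iff_add_eq_zero] using this

end IsCritical

end HamiltonPontryagin

theorem discrete_hamilton_pontryagin_pair_groupoid_general
    (d : ℕ) (L : (Fin d → ℝ) × (Fin d → ℝ) → ℝ) (hL : ContDiff ℝ 1 L)
    (N : ℕ) (qa qb : Fin d → ℝ)
    (q0 q1 : ℕ → ℝ → Fin d → ℝ)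
    (p0 p1 : ℕ → ℝ → (Fin d → ℝ) →L[ℝ] ℝ)
    (hq0 : ∀ n, ContDiff ℝ 1 (q0 n)) (hq1 : ∀ n, ContDiff ℝ 1 (q1 n))
    (hp0 : ∀ n, ContDiff ℝ 1 (p0 n)) (hp1 : ∀ n, ContDiff ℝ 1 (p1 n))
    -- paths start on the zero section
    (hzero0 : ∀ n, p0 n 0 = 0) (hzero1 : ∀ n, p1 n 0 = 0)
    -- admissibility at s = 0
    (hadm0 : q0 1 0 = qa)
    (hadm : ∀ n, 1 ≤ n → n ≤ N - 1 → q1 n 0 = q0 (n + 1) 0)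
    (hadmN : q1 N 0 = qb)
    -- criticality of the discrete Hamilton–Pontryagin action
    (hcrit : ∀ (δq0 δq1 : ℕ → ℝ → Fin d → ℝ)
        (δp0 δp1 : ℕ → ℝ → (Fin d → ℝ) →L[ℝ] ℝ),
      (∀ n, ContDiff ℝ 1 (δq0 n)) → (∀ n, ContDiff ℝ 1 (δq1 n)) →
      (∀ n, ContDiff ℝ 1 (δp0 n)) → (∀ n, ContDiff ℝ 1 (δp1 n)) →
      (∀ n, δp0 n 0 = 0) → (∀ n, δp1 n 0 = 0) →
      δq0 1 0 = 0 →
      (∀ n, 1 ≤ n → n ≤ N - 1 → δq1 n 0 = δq0 (n + 1) 0) →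
      δq1 N 0 = 0 →
      deriv (fun ε : ℝ =>
        ∑ n ∈ Finset.Icc 1 N, ∫ s in (0:ℝ)..1,
          (L (q0 n s + ε • δq0 n s, q1 n s + ε • δq1 n s)
            - (p0 n s + ε • δp0 n s) (deriv (fun u => q0 n u + ε • δq0 n u) s)
            + (p1 n s + ε • δp1 n s) (deriv (fun u => q1 n u + ε • δq1 n u) s)))
        0 = 0) :
    -- (i) configuration components are constant and match up
    ((∀ n, 1 ≤ n → n ≤ N → ∀ s ∈ Set.Icc (0:ℝ) 1,
        q0 n s = q0 n 0 ∧ q1 n s = q1 n 0) ∧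
      q0 1 0 = qa ∧
      (∀ n, 1 ≤ n → n ≤ N - 1 → q1 n 0 = q0 (n + 1) 0) ∧
      q1 N 0 = qb) ∧
    -- (ii) discrete Legendre transforms
    (∀ n, 1 ≤ n → n ≤ N →
      p0 n 1 = -D1 L (q0 n 0) (q1 n 0) ∧ p1 n 1 = D2 L (q0 n 0) (q1 n 0)) ∧
    -- (iii) discrete Euler–Lagrange equations
    (∀ n, 1 ≤ n → n ≤ N - 1 → p1 n 1 = p0 (n + 1) 1) := by
  open HamiltonPontryagin in
  have hc : IsCritical L N q0 q1 p0 p1 := by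
    intro δq0 δq1 δp0 δp1 hδq0 hδq1 hδp0 hδp1 hδp0_zero hδp1_zero hδq0_one hδq_adm hδq1_N
    have hS := HasDerivAt.fun_sum (u := Finset.Icc 1 N) fun n _ =>
      hasDerivAt_action hL (hq0 n) (hq1 n) (hp0 n).continuous (hp1 n).continuous
        (hδq0 n) (hδq1 n) (hδp0 n).continuous (hδp1 n).continuous
    exact hS.deriv.symm.trans
      (hcrit δq0 δq1 δp0 δp1 hδq0 hδq1 hδp0 hδp1 hδp0_zero hδp1_zero hδq0_one hδq_adm hδq1_N)
  refine ⟨⟨fun n h1 h2 s hs => ?_, hadm0, hadm, hadmN⟩, fun n h1 h2 =>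
    hc.momentum_one_eq hL hq0 hq1 hp0 hp1 hzero0 hzero1 (Finset.mem_Icc.2 ⟨h1, h2⟩),
    fun n h1 h2 => hc.momentum1_one_eq_momentum0_succ_one hL hq0 hq1 hp0 hp1 hzero0 hzero1 h1 h2⟩
  obtain ⟨hc0, hc1⟩ := hc.configuration_const hq0 hq1 (Finset.mem_Icc.2 ⟨h1, h2⟩)
  exact ⟨hc0 s hs, hc1 s hs⟩

/-- Discrete Hamilton–Pontryagin principle on the pair groupoid: a critical
sequence of paths in T*(Q×Q) starting at the zero section, admissible at s = 0,
satisfies (i) constancy of the configuration components together with the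
discrete second-order condition, (ii) the discrete Legendre transforms,
(iii) the discrete Euler–Lagrange (momentum matching) equations. -/
theorem discrete_hamilton_pontryagin_pair_groupoid
    (d : ℕ) (L : (Fin d → ℝ) × (Fin d → ℝ) → ℝ) (hL : ContDiff ℝ 1 L)
    (N : ℕ) (hN : 1 ≤ N) (qa qb : Fin d → ℝ)
    (q0 q1 : ℕ → ℝ → Fin d → ℝ)
    (p0 p1 : ℕ → ℝ → (Fin d → ℝ) →L[ℝ] ℝ)
    (hq0 : ∀ n, ContDiff ℝ 1 (q0 n)) (hq1 : ∀ n, ContDiff ℝ 1 (q1 n))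
    (hp0 : ∀ n, ContDiff ℝ 1 (p0 n)) (hp1 : ∀ n, ContDiff ℝ 1 (p1 n))
    -- paths start on the zero section
    (hzero0 : ∀ n, p0 n 0 = 0) (hzero1 : ∀ n, p1 n 0 = 0)
    -- admissibility at s = 0
    (hadm0 : q0 1 0 = qa)
    (hadm : ∀ n, 1 ≤ n → n ≤ N - 1 → q1 n 0 = q0 (n + 1) 0)
    (hadmN : q1 N 0 = qb)
    -- criticality of the discrete Hamilton–Pontryagin action
    (hcrit : ∀ (δq0 δq1 : ℕ → ℝ → Fin d → ℝ)
        (δp0 δp1 : ℕ → ℝ → (Fin d → ℝ) →L[ℝ] ℝ),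
      (∀ n, ContDiff ℝ 1 (δq0 n)) → (∀ n, ContDiff ℝ 1 (δq1 n)) →
      (∀ n, ContDiff ℝ 1 (δp0 n)) → (∀ n, ContDiff ℝ 1 (δp1 n)) →
      (∀ n, δp0 n 0 = 0) → (∀ n, δp1 n 0 = 0) →
      δq0 1 0 = 0 →
      (∀ n, 1 ≤ n → n ≤ N - 1 → δq1 n 0 = δq0 (n + 1) 0) →
      δq1 N 0 = 0 →
      deriv (fun ε : ℝ =>
        ∑ n ∈ Finset.Icc 1 N, ∫ s in (0:ℝ)..1,
          (L (q0 n s + ε • δq0 n s, q1 n s + ε • δq1 n s)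
            - (p0 n s + ε • δp0 n s) (deriv (fun u => q0 n u + ε • δq0 n u) s)
            + (p1 n s + ε • δp1 n s) (deriv (fun u => q1 n u + ε • δq1 n u) s)))
        0 = 0) :
    -- (i) configuration components are constant and match up
    ((∀ n, 1 ≤ n → n ≤ N → ∀ s ∈ Set.Icc (0:ℝ) 1,
        q0 n s = q0 n 0 ∧ q1 n s = q1 n 0) ∧
      q0 1 0 = qa ∧
      (∀ n, 1 ≤ n → n ≤ N - 1 → q1 n 0 = q0 (n + 1) 0) ∧
      q1 N 0 = qb) ∧
    -- (ii) discrete Legendre transforms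
    (∀ n, 1 ≤ n → n ≤ N →
      p0 n 1 = -D1 L (q0 n 0) (q1 n 0) ∧ p1 n 1 = D2 L (q0 n 0) (q1 n 0)) ∧
    -- (iii) discrete Euler–Lagrange equations
    (∀ n, 1 ≤ n → n ≤ N - 1 → p1 n 1 = p0 (n + 1) 1) :=
  discrete_hamilton_pontryagin_pair_groupoid_general d L hL N qa qb q0 q1 p0 p1 hq0 hq1 hp0 hp1
    hzero0 hzero1 hadm0 hadm hadmN hcrit
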